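/- arXiv:2008.02410 — 3 statements merged into one kernel-verified Lean document; each statement's English description precedes it below -/
import Mathlib

section
/- With μ defined by μ(1)=1 and μ(n) = min_{1 ≤ p ≤ n-1} n·μ(p)·μ(n-p), and β(n) = μ(n)·n/2^(2n-2), we have β(n) ≥ 9/8 for every n ≥ 2 that is not a power of two. -/
/-!
Let `L n` (`betaLowerBound n`) be `1` if `n` is a power of two and `9/8` otherwise; then
`L n ≤ β n` for all `n ≥ 1`, by strong induction. If the minimum defining `μ (p + q)` is attained
at the split `p, q`, then `β (p + q) = (p + q)² / (4pq) · β p · β q`, so it suffices that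
`4pq · L (p + q) ≤ (p + q)² · L p · L q`. This is AM–GM unless `p + q` is not a power of two while
`p` and `q` are; but then `p ≠ q`, so one of them is at least twice the other, and
`9pq ≤ 2 (p + q)²` is `(2p - q)(p - 2q) ≥ 0`.
-/

/-- `μ(1) = 1` and `μ(n) = min_{1 ≤ p ≤ n-1} n·μ(p)·μ(n-p)` for `n ≥ 2`. -/
def mu : ℕ → ℕ
  | 0 => 1
  | 1 => 1
  | n + 2 =>
    (Finset.Icc 1 (n + 1)).attach.inf'
      (Finset.attach_nonempty_iff.mpr (Finset.nonempty_Icc.mpr (by omega)))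
      (fun p => (n + 2) * mu p.1 * mu (n + 2 - p.1))
decreasing_by
  · have := p.2; simp only [Finset.mem_Icc] at this; omega
  · have := p.2; simp only [Finset.mem_Icc] at this; omega

/-- `β(n) = μ(n)/τ(n) = μ(n)·n/2^(2n-2)`. -/
def beta (n : ℕ) : ℚ := (mu n : ℚ) * n / 2 ^ (2 * n - 2)

lemma exists_mu_eq_mul (n : ℕ) :
    ∃ p q, 1 ≤ p ∧ 1 ≤ q ∧ p + q = n + 2 ∧ mu (n + 2) = (n + 2) * mu p * mu q := by
  rw [mu]
  obtain ⟨⟨p, hp⟩, -, hmin⟩ := Finset.exists_mem_eq_inf'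
    (Finset.attach_nonempty_iff.mpr (Finset.nonempty_Icc.mpr (by omega : 1 ≤ n + 1)))
    (fun p : Finset.Icc 1 (n + 1) => (n + 2) * mu p.1 * mu (n + 2 - p.1))
  rw [Finset.mem_Icc] at hp
  exact ⟨p, n + 2 - p, hp.1, by omega, by omega, hmin⟩

lemma beta_one : beta 1 = 1 := by
  simp [beta, mu]

lemma beta_add_of_mu_eq {p q : ℕ} (hp : 1 ≤ p) (hq : 1 ≤ q)
    (hmu : mu (p + q) = (p + q) * mu p * mu q) :
    beta (p + q) = ((p : ℚ) + q) ^ 2 / (4 * p * q) * beta p * beta q := by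
  have hexp : 2 * (p + q) - 2 = (2 * p - 2) + (2 * q - 2) + 2 := by omega
  have hp' : (p : ℚ) ≠ 0 := by positivity
  have hq' : (q : ℚ) ≠ 0 := by positivity
  simp only [beta, hmu, hexp, pow_add]
  push_cast
  field_simp
  ring

lemma two_mul_le_or_two_mul_le_of_isPowerOfTwo {p q : ℕ} (hp : p.isPowerOfTwo)
    (hq : q.isPowerOfTwo) (hpq : ¬ (p + q).isPowerOfTwo) : 2 * p ≤ q ∨ 2 * q ≤ p := by
  obtain ⟨a, rfl⟩ := hp
  obtain ⟨b, rfl⟩ := hq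
  rcases lt_trichotomy a b with hab | rfl | hab
  · exact .inl (by rw [← pow_succ']; exact Nat.pow_le_pow_right two_pos hab)
  · exact absurd ⟨a + 1, by ring⟩ hpq
  · exact .inr (by rw [← pow_succ']; exact Nat.pow_le_pow_right two_pos hab)

def betaLowerBound (n : ℕ) : ℚ := if n.isPowerOfTwo then 1 else 9 / 8

lemma betaLowerBound_of_isPowerOfTwo {n : ℕ} (hn : n.isPowerOfTwo) : betaLowerBound n = 1 :=
  if_pos hn

lemma betaLowerBound_of_not_isPowerOfTwo {n : ℕ} (hn : ¬ n.isPowerOfTwo) :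
    betaLowerBound n = 9 / 8 :=
  if_neg hn

lemma one_le_betaLowerBound (n : ℕ) : 1 ≤ betaLowerBound n := by
  unfold betaLowerBound; split_ifs <;> norm_num

lemma nine_div_eight_le_betaLowerBound_mul {p q : ℕ} (h : ¬ (p.isPowerOfTwo ∧ q.isPowerOfTwo)) :
    9 / 8 ≤ betaLowerBound p * betaLowerBound q := by
  have hLp := one_le_betaLowerBound p
  have hLq := one_le_betaLowerBound q
  rcases not_and_or.mp h with h | h
  · rw [betaLowerBound_of_not_isPowerOfTwo h]; linarith
  · rw [betaLowerBound_of_not_isPowerOfTwo h]; linarith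

lemma four_mul_mul_betaLowerBound_add_le {p q : ℕ} :
    4 * p * q * betaLowerBound (p + q) ≤
      ((p : ℚ) + q) ^ 2 * betaLowerBound p * betaLowerBound q := by
  have amgm : 4 * (p : ℚ) * q ≤ ((p : ℚ) + q) ^ 2 := by nlinarith [sq_nonneg ((p : ℚ) - q)]
  have hsq : (0 : ℚ) ≤ ((p : ℚ) + q) ^ 2 := by positivity
  rw [mul_assoc _ (betaLowerBound p)]
  by_cases hpq : (p + q).isPowerOfTwo
  · rw [betaLowerBound_of_isPowerOfTwo hpq, mul_one]
    exact amgm.trans (le_mul_of_one_le_right hsq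
      (one_le_mul_of_one_le_of_one_le (one_le_betaLowerBound p) (one_le_betaLowerBound q)))
  rw [betaLowerBound_of_not_isPowerOfTwo hpq]
  by_cases hpow : p.isPowerOfTwo ∧ q.isPowerOfTwo
  · rw [betaLowerBound_of_isPowerOfTwo hpow.1, betaLowerBound_of_isPowerOfTwo hpow.2]
    rcases two_mul_le_or_two_mul_le_of_isPowerOfTwo hpow.1 hpow.2 hpq with h | h
    · have h' : 2 * (p : ℚ) ≤ q := by exact_mod_cast h
      nlinarith
    · have h' : 2 * (q : ℚ) ≤ p := by exact_mod_cast h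
      nlinarith
  · exact mul_le_mul amgm (nine_div_eight_le_betaLowerBound_mul hpow) (by norm_num) hsq

theorem betaLowerBound_le_beta {n : ℕ} (hn : 1 ≤ n) : betaLowerBound n ≤ beta n := by
  induction n using Nat.strong_induction_on with
  | _ n ih =>
  obtain ⟨m, rfl | rfl⟩ : ∃ m, n = 1 ∨ n = m + 2 := ⟨n - 2, by omega⟩
  · rw [beta_one, betaLowerBound_of_isPowerOfTwo ⟨0, rfl⟩]
  obtain ⟨p, q, hp, hq, hpq, hmu⟩ := exists_mu_eq_mul m
  rw [← hpq] at hmu ⊢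
  rw [beta_add_of_mu_eq hp hq (by exact_mod_cast hmu)]
  have hβp := ih p (by omega) hp
  have hβq := ih q (by omega) hq
  have hpos : (0 : ℚ) < 4 * p * q := by positivity
  calc betaLowerBound (p + q)
      ≤ ((p : ℚ) + q) ^ 2 / (4 * p * q) * betaLowerBound p * betaLowerBound q := by
        rw [div_mul_eq_mul_div, div_mul_eq_mul_div, le_div_iff₀ hpos, mul_comm]
        exact four_mul_mul_betaLowerBound_add_le
    _ ≤ ((p : ℚ) + q) ^ 2 / (4 * p * q) * beta p * beta q := by
        have hc : 0 ≤ ((p : ℚ) + q) ^ 2 / (4 * p * q) := by positivity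
        have hLp := one_le_betaLowerBound p
        have hLq := one_le_betaLowerBound q
        exact mul_le_mul (mul_le_mul_of_nonneg_left hβp hc) hβq (by linarith)
          (mul_nonneg hc (by linarith))

/-- `β(n) ≥ 9/8` for every `n ≥ 2` that is not a power of two. -/
theorem stmt_8 (n : ℕ) (hn : 2 ≤ n) (h : ¬ ∃ k : ℕ, n = 2 ^ k) : 9 / 8 ≤ beta n := by
  have hbound := betaLowerBound_le_beta (n := n) (by omega)
  rwa [betaLowerBound_of_not_isPowerOfTwo h] at hbound
end

section
/- With β(n) = μ(n)·n/2^(2n-2), there exists a constant C such that β(n) ≤ n^C for all n ≥ 1; more precisely β(n) ≤ (9/8)^(log_{3/2} n). -/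
lemma mu_one : mu 1 = 1 := by simp [mu]

lemma mu_le {n p : ℕ} (h1 : 1 ≤ p) (h2 : p < n) (hn : 2 ≤ n) :
    mu n ≤ n * mu p * mu (n - p) := by
  obtain ⟨m, rfl⟩ : ∃ m, n = m + 2 := ⟨n - 2, by omega⟩
  rw [mu]
  exact Finset.inf'_le _ (Finset.mem_attach _ ⟨p, Finset.mem_Icc.mpr (by omega)⟩)

lemma mu_pow2 (k : ℕ) : mu (2 ^ k) * 2 ^ (k + 2) ≤ 2 ^ (2 * 2 ^ k) := by
  induction k with
  | zero => simp [mu_one]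
  | succ k ih =>
      have h1 : mu (2 ^ (k + 1)) ≤ 2 ^ (k + 1) * mu (2 ^ k) * mu (2 ^ k) := by
        have hdbl : 2 ^ (k + 1) = 2 ^ k + 2 ^ k := by ring
        have hone : 1 ≤ 2 ^ k := Nat.one_le_two_pow
        have := mu_le (n := 2 ^ (k + 1)) (p := 2 ^ k)
          hone (by omega) (by omega)
        have hsub : 2 ^ (k + 1) - 2 ^ k = 2 ^ k := by
          have h2 : 2 ^ (k + 1) = 2 ^ k + 2 ^ k := by ring
          omega
        rwa [hsub] at this
      calc mu (2 ^ (k + 1)) * 2 ^ (k + 1 + 2)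
          ≤ (2 ^ (k + 1) * mu (2 ^ k) * mu (2 ^ k)) * 2 ^ (k + 3) := by
            exact Nat.mul_le_mul_right _ h1
        _ = (mu (2 ^ k) * 2 ^ (k + 2)) * (mu (2 ^ k) * 2 ^ (k + 2)) := by ring
        _ ≤ 2 ^ (2 * 2 ^ k) * 2 ^ (2 * 2 ^ k) := Nat.mul_le_mul ih ih
        _ = 2 ^ (2 * 2 ^ (k + 1)) := by rw [← pow_add]; ring_nf

lemma beta_step {n : ℕ} (hn : 2 ≤ n) :
    ∃ m : ℕ, 1 ≤ m ∧ 3 * m ≤ 2 * n ∧ m < n ∧ beta n ≤ 9 / 8 * beta m := by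
  -- choose s = 2^k with 3s ≤ 2n < 6s and μ(s)·4s ≤ 2^(2s)
  obtain ⟨s, hs4, hsle, hslt⟩ :
      ∃ s, mu s * (4 * s) ≤ 2 ^ (2 * s) ∧ 3 * s ≤ 2 * n ∧ 2 * n < 6 * s := by
    refine ⟨2 ^ Nat.log 2 (2 * n / 3), ?_, ?_, ?_⟩
    · have h := mu_pow2 (Nat.log 2 (2 * n / 3))
      have h4 : (2:ℕ) ^ (Nat.log 2 (2 * n / 3) + 2) = 4 * 2 ^ Nat.log 2 (2 * n / 3) := by
        ring
      rw [h4] at h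
      exact h
    · have h := Nat.pow_log_le_self 2 (show 2 * n / 3 ≠ 0 by omega)
      omega
    · have h := Nat.lt_pow_succ_log_self (by norm_num : 1 < 2) (2 * n / 3)
      have h2 : (2:ℕ) ^ (Nat.log 2 (2 * n / 3) + 1) = 2 * 2 ^ Nat.log 2 (2 * n / 3) := by
        ring
      omega
  have hs1 : 1 ≤ s := by omega
  have hsltn : s < n := by omega
  refine ⟨n - s, by omega, by omega, by omega, ?_⟩
  set m := n - s with hm
  have hm1 : 1 ≤ m := by omega
  have hmu : mu n ≤ n * mu s * mu m := mu_le hs1 hsltn hn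
  have hsm : 2 * n ^ 2 ≤ 9 * (s * m) := by
    zify
    nlinarith [mul_nonneg (by omega : (0:ℤ) ≤ 2 * (m:ℤ) - s)
      (by omega : (0:ℤ) ≤ 2 * (s:ℤ) - m), (by omega : (n:ℤ) = s + m)]
  have hnat : mu n * n * (8 * 2 ^ (2 * m - 2)) ≤ 9 * (mu m * m) * 2 ^ (2 * n - 2) := by
    have hexp : (2:ℕ) ^ (2 * n - 2) = 2 ^ (2 * m - 2) * 2 ^ (2 * s) := by
      rw [← pow_add]; congr 1; omega
    rw [hexp]
    calc mu n * n * (8 * 2 ^ (2 * m - 2))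
        ≤ (n * mu s * mu m) * n * (8 * 2 ^ (2 * m - 2)) :=
          Nat.mul_le_mul_right _ (Nat.mul_le_mul_right _ hmu)
      _ = (2 * n ^ 2) * (mu s * mu m * (4 * 2 ^ (2 * m - 2))) := by ring
      _ ≤ (9 * (s * m)) * (mu s * mu m * (4 * 2 ^ (2 * m - 2))) :=
          Nat.mul_le_mul_right _ hsm
      _ = 9 * m * (mu m * 2 ^ (2 * m - 2)) * (mu s * (4 * s)) := by ring
      _ ≤ 9 * m * (mu m * 2 ^ (2 * m - 2)) * 2 ^ (2 * s) :=
          Nat.mul_le_mul_left _ hs4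
      _ = 9 * (mu m * m) * (2 ^ (2 * m - 2) * 2 ^ (2 * s)) := by ring
  have hq : beta n ≤ 9 * ((mu m : ℚ) * m) / (8 * 2 ^ (2 * m - 2)) := by
    rw [beta, div_le_div_iff₀ (by positivity) (by positivity)]
    exact_mod_cast hnat
  calc beta n ≤ 9 * ((mu m : ℚ) * m) / (8 * 2 ^ (2 * m - 2)) := hq
    _ = 9 / 8 * beta m := by rw [beta]; ring

lemma main_bound : ∀ n : ℕ, 1 ≤ n →
    ((beta n : ℚ) : ℝ) ≤ (9 / 8 : ℝ) ^ (Real.log n / Real.log (3 / 2)) := by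
  intro n
  induction n using Nat.strong_induction_on with
  | _ n ih =>
    intro hn
    rcases eq_or_lt_of_le hn with h1 | h2
    · -- n = 1
      rw [← h1]
      simp [beta, mu_one, Real.log_one]
    · -- n ≥ 2
      obtain ⟨m, hm1, hm2, hm3, hstep⟩ := beta_step h2
      have ihm := ih m hm3 hm1
      have hb32 : (1 : ℝ) < 9 / 8 := by norm_num
      have hlog32 : (0 : ℝ) < Real.log (3 / 2) :=
        Real.log_pos (by norm_num)
      have hmpos : (0 : ℝ) < m := by exact_mod_cast hm1
      have hexple : Real.log m / Real.log (3 / 2) + 1 ≤ Real.log n / Real.log (3 / 2) := by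
        rw [div_add' _ _ _ (ne_of_gt hlog32), div_le_div_iff₀ hlog32 hlog32]
        have hlogle : Real.log m + Real.log (3 / 2) ≤ Real.log n := by
          rw [← Real.log_mul (ne_of_gt hmpos) (by norm_num)]
          apply Real.log_le_log (by positivity)
          have : (3 : ℝ) * m ≤ 2 * n := by exact_mod_cast hm2
          linarith
        nlinarith
      calc ((beta n : ℚ) : ℝ) ≤ (9 / 8 : ℝ) * ((beta m : ℚ) : ℝ) := by
            have h := (Rat.cast_le (K := ℝ)).mpr hstep
            push_cast at h
            linarith
        _ ≤ (9 / 8 : ℝ) * (9 / 8 : ℝ) ^ (Real.log m / Real.log (3 / 2)) := by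
            nlinarith
        _ = (9 / 8 : ℝ) ^ (Real.log m / Real.log (3 / 2) + 1) := by
            rw [Real.rpow_add (by norm_num), Real.rpow_one]; ring
        _ ≤ (9 / 8 : ℝ) ^ (Real.log n / Real.log (3 / 2)) := by
            exact Real.rpow_le_rpow_left_iff hb32 |>.mpr hexple

/-- `β(n)` is polynomially bounded: there is a constant `C` with `β(n) ≤ n^C` for all
`n ≥ 1`; more precisely `β(n) ≤ (9/8)^(log_{3/2} n)`. -/
theorem stmt_9 :
    (∃ C : ℝ, ∀ n : ℕ, 1 ≤ n → ((beta n : ℚ) : ℝ) ≤ (n : ℝ) ^ C) ∧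
      ∀ n : ℕ, 1 ≤ n →
        ((beta n : ℚ) : ℝ) ≤ (9 / 8 : ℝ) ^ (Real.log n / Real.log (3 / 2)) := by
  constructor
  · refine ⟨Real.log (9 / 8) / Real.log (3 / 2), fun n hn => ?_⟩
    have hnpos : (0 : ℝ) < n := by exact_mod_cast hn
    have heq : (n : ℝ) ^ (Real.log (9 / 8) / Real.log (3 / 2))
        = (9 / 8 : ℝ) ^ (Real.log n / Real.log (3 / 2)) := by
      rw [Real.rpow_def_of_pos hnpos, Real.rpow_def_of_pos (by norm_num)]
      congr 1
      ring
    rw [heq]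
    exact main_bound n hn
  · exact main_bound
end

section
/- Let n ≤ m. There exists a JL-coloring φ of K_{n,m} with exactly (n-1)(m-1)+1 rainbow spanning trees, and every JL-coloring φ of K_{n,m} satisfies |R(K_{n,m},φ)| ≥ (n-1)(m-1)+1. -/
/-!
Without rainbow cycles every rainbow edge set is a forest, so when there are `k` colours and
`k + 1` vertices the rainbow spanning trees are exactly the edge sets meeting every colour class
once (a forest with `k` edges on `k + 1` vertices is a tree). Hence their number is the product of
the class sizes. These are `n + m - 1` positive integers summing to `nm`, and a product of positive
integers is at least their sum minus their number plus one, which gives the lower bound.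

In the extremal colouring every class except that of `ab` is a single edge at `a` or `b`, so the
product is `nm - (n + m - 2)`. It has no rainbow cycle: such a cycle would extend to a choice of
one edge per colour, and every such choice is connected (the two stars at `a` and `b` joined either
by `ab` or by a path `b i j a` through the chosen edge `ij` of the class of `ab`), hence a tree.
-/

/-- `T` is the edge set of a spanning tree of `G`: its edges lie in `G`, and the graph
formed by these edges is connected (hence spanning) and acyclic. -/
def IsSpanningTreeEdges {V : Type*} (G : SimpleGraph V) (T : Finset (Sym2 V)) : Prop :=
  ↑T ⊆ G.edgeSet ∧ (SimpleGraph.fromEdgeSet (↑T : Set (Sym2 V))).Connected ∧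
    (SimpleGraph.fromEdgeSet (↑T : Set (Sym2 V))).IsAcyclic

/-- An edge set is rainbow under a coloring `φ` if all its edges receive distinct colors. -/
def IsRainbow {V : Type*} {k : ℕ} (φ : Sym2 V → Fin k) (T : Finset (Sym2 V)) : Prop :=
  Set.InjOn φ ↑T

/-- `G` has a rainbow cycle under `φ`: a cycle whose edges receive pairwise distinct colors. -/
def HasRainbowCycle {V : Type*} {k : ℕ} (G : SimpleGraph V) (φ : Sym2 V → Fin k) : Prop :=
  ∃ (v : V) (c : G.Walk v v), c.IsCycle ∧ Set.InjOn φ {e | e ∈ c.edges}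

/-- `φ` is a JL-coloring of `G`: every one of the `k` colors appears on some edge of `G`
(surjectivity onto the colors) and there is no rainbow cycle. -/
def IsJLColoring {V : Type*} {k : ℕ} (G : SimpleGraph V) (φ : Sym2 V → Fin k) : Prop :=
  (∀ c : Fin k, ∃ e ∈ G.edgeSet, φ e = c) ∧ ¬ HasRainbowCycle G φ

/-- The number of rainbow spanning trees of `G` under the edge coloring `φ`. -/
noncomputable def numRST {V : Type*} {k : ℕ} (G : SimpleGraph V) (φ : Sym2 V → Fin k) : ℕ :=
  Nat.card {T : Finset (Sym2 V) // IsSpanningTreeEdges G T ∧ IsRainbow φ T}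

open SimpleGraph Finset

theorem SimpleGraph.IsAcyclic.connected_of_card_edgeSet {V : Type*} [Finite V] [Nonempty V]
    {G : SimpleGraph V} (hG : G.IsAcyclic) (hcard : Nat.card G.edgeSet + 1 = Nat.card V) :
    G.Connected := by
  by_contra hconn
  obtain ⟨u, v, huv⟩ : ∃ u v, ¬ G.Reachable u v := by
    by_contra! h
    exact hconn ⟨h⟩
  obtain ⟨T, hle, -, hT⟩ := connected_top.exists_isTree_le_of_le_of_isAcyclic le_top
    (hG.sup_edge_of_not_reachable huv)
  have hsub : insert s(u, v) G.edgeSet ⊆ T.edgeSet := by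
    have hne : u ≠ v := fun h => huv (h ▸ Reachable.refl u)
    have := edgeSet_mono hle
    rw [edgeSet_sup, edgeSet_edge_of_ne hne, Set.union_singleton] at this
    exact this
  have hnotMem : s(u, v) ∉ G.edgeSet := fun h => huv (Adj.reachable h)
  have := Set.ncard_le_ncard hsub (Set.toFinite _)
  rw [Set.ncard_insert_of_notMem hnotMem (Set.toFinite _)] at this
  have hT := (isTree_iff_connected_and_card.mp hT).2
  simp only [Nat.card_coe_set_eq] at hcard hT
  omega

section Transversal

variable {α ι : Type*} [Fintype ι] {φ : α → ι}

lemma bijOn_image_univ_of_leftInverse [DecidableEq α] {f : ι → α}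
    (hf : Function.LeftInverse φ f) : Set.BijOn φ ↑(univ.image f) Set.univ := by
  refine ⟨Set.mapsTo_univ _ _, ?_, fun i _ => ⟨f i, by simp, hf i⟩⟩
  simp only [coe_image, coe_univ, Set.image_univ]
  rintro _ ⟨i, rfl⟩ _ ⟨j, rfl⟩ h
  rw [hf i, hf j] at h
  rw [h]

lemma card_eq_of_bijOn_univ {T : Finset α} (hT : Set.BijOn φ ↑T Set.univ) :
    #T = Fintype.card ι := by
  rw [← card_univ]
  exact card_nbij φ (fun _ _ => mem_univ _) hT.injOn (by simpa using hT.surjOn)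

lemma bijOn_univ_of_card_eq {T : Finset α} (hinj : Set.InjOn φ ↑T) (hT : #T = Fintype.card ι) :
    Set.BijOn φ ↑T Set.univ :=
  ⟨Set.mapsTo_univ _ _, hinj, by
    simpa using surjOn_of_injOn_of_card_le (t := univ) φ (by simp) hinj (by simp [hT])⟩

lemma exists_bijOn_univ_superset [DecidableEq α] {s S : Set α} (hsS : s ⊆ S) (hs : s.InjOn φ)
    (hS : Set.SurjOn φ S Set.univ) :
    ∃ T : Finset α, s ⊆ ↑T ∧ ↑T ⊆ S ∧ Set.BijOn φ ↑T Set.univ := by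
  have : ∀ i, ∃ a ∈ S, φ a = i ∧ ∀ b ∈ s, φ b = i → b = a := by
    intro i
    by_cases h : ∃ b ∈ s, φ b = i
    · obtain ⟨b, hb, rfl⟩ := h
      exact ⟨b, hsS hb, rfl, fun b' hb' he => hs hb' hb he⟩
    · obtain ⟨a, ha, rfl⟩ := hS (Set.mem_univ i)
      exact ⟨a, ha, rfl, fun b hb he => (h ⟨b, hb, he⟩).elim⟩
  choose f hfS hφf hfs using this
  refine ⟨univ.image f, fun b hb => ?_, ?_, bijOn_image_univ_of_leftInverse hφf⟩
  · simpa using ⟨φ b, (hfs _ b hb rfl).symm⟩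
  · simpa [Set.range_subset_iff] using hfS

lemma card_bijOn_univ_subset [DecidableEq α] [DecidableEq ι] (φ : α → ι) (s : Finset α) :
    Nat.card {T : Finset α // T ⊆ s ∧ Set.BijOn φ ↑T Set.univ} =
      ∏ i, #{a ∈ s | φ a = i} := by
  let choice (f : ∀ i, {a // a ∈ s ∧ φ a = i}) :
      {T : Finset α // T ⊆ s ∧ Set.BijOn φ ↑T Set.univ} :=
    ⟨univ.image fun i => (f i).1, by simpa [subset_iff] using fun i => (f i).2.1,
      bijOn_image_univ_of_leftInverse fun i => (f i).2.2⟩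
  have hchoice : Function.Bijective choice := by
    refine ⟨fun f g hfg => funext fun i => Subtype.ext ?_, fun ⟨T, hTs, hT⟩ => ?_⟩
    · have : (f i).1 ∈ (choice g).1 := by
        rw [← hfg]
        exact mem_image_of_mem (fun i => (f i).1) (mem_univ i)
      obtain ⟨j, -, hj⟩ := mem_image.mp this
      have hji : j = i := by rw [← (g j).2.2, hj, (f i).2.2]
      rw [← hj, hji]
    · choose f hfT hφf using fun i => hT.surjOn (Set.mem_univ i)
      refine ⟨fun i => ⟨f i, hTs (hfT i), hφf i⟩, Subtype.ext ?_⟩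
      show univ.image f = T
      refine Subset.antisymm (by simpa [subset_iff] using hfT) fun a ha => ?_
      exact mem_image.mpr ⟨φ a, mem_univ _, hT.injOn (hfT _) ha (hφf _)⟩
  rw [← Nat.card_congr (Equiv.ofBijective choice hchoice), Nat.card_pi]
  refine prod_congr rfl fun i _ => ?_
  rw [← Nat.card_eq_finsetCard]
  simp

end Transversal

section Rainbow

variable {V : Type*} {k : ℕ} {G : SimpleGraph V} {φ : Sym2 V → Fin k}

lemma card_edgeSet_fromEdgeSet {T : Finset (Sym2 V)} (hT : ∀ e ∈ T, ¬ e.IsDiag) :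
    Nat.card (fromEdgeSet (T : Set (Sym2 V))).edgeSet = #T := by
  have : Disjoint (T : Set (Sym2 V)) Sym2.diagSet := Set.disjoint_left.mpr hT
  rw [edgeSet_fromEdgeSet, sdiff_eq_left.mpr this, Nat.card_coe_set_eq, Set.ncard_coe_finset]

lemma not_isAcyclic_fromEdgeSet_of_isCycle {s : Set (Sym2 V)} {v : V} {c : G.Walk v v}
    (hc : c.IsCycle) (hs : ∀ e ∈ c.edges, e ∈ s) : ¬ (fromEdgeSet s).IsAcyclic := fun h =>
  h _ (hc.transfer fun e he => by
    rw [edgeSet_fromEdgeSet]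
    exact ⟨hs e he, G.not_isDiag_of_mem_edgeSet (c.edges_subset_edgeSet he)⟩)

lemma IsRainbow.isAcyclic_fromEdgeSet (hφ : ¬ HasRainbowCycle G φ) {T : Finset (Sym2 V)}
    (hTG : ↑T ⊆ G.edgeSet) (hT : IsRainbow φ T) :
    (fromEdgeSet (T : Set (Sym2 V))).IsAcyclic := by
  intro v c hc
  have hcT : ∀ e ∈ c.edges, e ∈ (T : Set (Sym2 V)) := fun e he =>
    (edgeSet_fromEdgeSet _ ▸ c.edges_subset_edgeSet he).1
  refine hφ ⟨v, c.transfer G fun e he => hTG (hcT e he), hc.transfer _, ?_⟩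
  simp only [Walk.edges_transfer]
  exact hT.mono hcT

lemma isSpanningTreeEdges_and_isRainbow_iff [Fintype V] (hφ : ¬ HasRainbowCycle G φ)
    (hV : Fintype.card V = k + 1) {T : Finset (Sym2 V)} :
    IsSpanningTreeEdges G T ∧ IsRainbow φ T ↔
      ↑T ⊆ G.edgeSet ∧ Set.BijOn φ ↑T Set.univ := by
  constructor
  · rintro ⟨⟨hTG, hconn, hacyc⟩, hT⟩
    have hcard := (isTree_iff_connected_and_card.mp ⟨hconn, hacyc⟩).2
    rw [card_edgeSet_fromEdgeSet fun e he => G.not_isDiag_of_mem_edgeSet (hTG he),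
      Nat.card_eq_fintype_card, hV] at hcard
    exact ⟨hTG, bijOn_univ_of_card_eq hT (by simpa using hcard)⟩
  · rintro ⟨hTG, hT⟩
    have hacyc := IsRainbow.isAcyclic_fromEdgeSet hφ hTG hT.injOn
    have : Nonempty V := Fintype.card_pos_iff.mp (by omega)
    refine ⟨⟨hTG, hacyc.connected_of_card_edgeSet ?_, hacyc⟩, hT.injOn⟩
    rw [card_edgeSet_fromEdgeSet fun e he => G.not_isDiag_of_mem_edgeSet (hTG he),
      card_eq_of_bijOn_univ hT, Nat.card_eq_fintype_card, hV, Fintype.card_fin]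

lemma numRST_eq_prod [Fintype V] [DecidableEq V] [DecidableRel G.Adj]
    (hφ : ¬ HasRainbowCycle G φ) (hV : Fintype.card V = k + 1) :
    numRST G φ = ∏ c, #{e ∈ G.edgeFinset | φ e = c} := by
  rw [numRST, ← card_bijOn_univ_subset]
  refine Nat.card_congr (Equiv.subtypeEquivRight fun T => ?_)
  rw [isSpanningTreeEdges_and_isRainbow_iff hφ hV, ← coe_edgeFinset, coe_subset]

lemma not_hasRainbowCycle_of_forall_bijOn_connected [Fintype V] [DecidableEq V]
    (hV : Fintype.card V = k + 1) (hsurj : ∀ c, ∃ e ∈ G.edgeSet, φ e = c)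
    (hconn : ∀ T : Finset (Sym2 V), ↑T ⊆ G.edgeSet → Set.BijOn φ ↑T Set.univ →
      (fromEdgeSet (T : Set (Sym2 V))).Connected) :
    ¬ HasRainbowCycle G φ := by
  rintro ⟨v, c, hc, hrb⟩
  obtain ⟨T, hcT, hTG, hT⟩ := exists_bijOn_univ_superset (fun e he => c.edges_subset_edgeSet he)
    hrb fun i _ => hsurj i
  have htree : (fromEdgeSet (T : Set (Sym2 V))).IsTree := by
    refine isTree_iff_connected_and_card.mpr ⟨hconn T hTG hT, ?_⟩
    rw [card_edgeSet_fromEdgeSet fun e he => G.not_isDiag_of_mem_edgeSet (hTG he),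
      card_eq_of_bijOn_univ hT, Nat.card_eq_fintype_card, hV, Fintype.card_fin]
  exact not_isAcyclic_fromEdgeSet_of_isCycle hc (fun e he => hcT he) htree.isAcyclic

end Rainbow

lemma Finset.sum_add_one_le_prod_add_card {α : Type*} (s : Finset α) (f : α → ℕ)
    (hf : ∀ i ∈ s, 1 ≤ f i) : ∑ i ∈ s, f i + 1 ≤ ∏ i ∈ s, f i + #s := by
  classical
  induction s using Finset.induction_on with
  | empty => simp
  | @insert a s ha ih =>
    have ha1 : 1 ≤ f a := hf a (mem_insert_self a s)
    have hs1 : 1 ≤ ∏ i ∈ s, f i := one_le_prod' fun i hi => hf i (mem_insert_of_mem hi)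
    have ih := ih fun i hi => hf i (mem_insert_of_mem hi)
    rw [sum_insert ha, prod_insert ha, card_insert_of_notMem ha]
    nlinarith

instance (V W : Type*) : DecidableRel (completeBipartiteGraph V W).Adj := fun v w =>
  inferInstanceAs (Decidable (v.isLeft ∧ w.isRight ∨ v.isRight ∧ w.isLeft))

lemma card_edgeFinset_completeBipartiteGraph (n m : ℕ) :
    #(completeBipartiteGraph (Fin n) (Fin m)).edgeFinset = n * m := by
  rw [← Set.ncard_coe_finset, coe_edgeFinset, Set.ncard_def,
    encard_edgeSet_completeBipartiteGraph]
  simp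

lemma sum_card_filter_edgeFinset_completeBipartiteGraph {n m k : ℕ}
    (φ : Sym2 (Fin n ⊕ Fin m) → Fin k) :
    ∑ c, #{e ∈ (completeBipartiteGraph (Fin n) (Fin m)).edgeFinset | φ e = c} = n * m := by
  rw [← card_edgeFinset_completeBipartiteGraph,
    card_eq_sum_card_fiberwise fun e _ => mem_univ (φ e)]

lemma mul_add_one_eq_sub_one_mul_sub_one_add {n m : ℕ} (hn : 1 ≤ n) (hm : 1 ≤ m) :
    n * m + 1 = (n - 1) * (m - 1) + 1 + (n + m - 1) := by
  obtain ⟨a, rfl⟩ := Nat.exists_eq_add_of_le hn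
  obtain ⟨b, rfl⟩ := Nat.exists_eq_add_of_le hm
  simp only [Nat.add_sub_cancel_left]
  ring_nf
  omega

lemma card_fin_sum_fin {n m : ℕ} (hn : 1 ≤ n) :
    Fintype.card (Fin n ⊕ Fin m) = n + m - 1 + 1 := by
  simp only [Fintype.card_sum, Fintype.card_fin]
  omega

section StarColoring

variable {n m : ℕ}

/-- Colours of `K_{n,m}` with `a = inl 0` and `b = inr 0`: the edge `a - inr j` gets colour `j`,
the edge `inl i - b` (for `i ≠ 0`) gets colour `m - 1 + i`, and every other edge gets the colour
`0` of `ab`. -/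
def starCode (m i j : ℕ) : ℕ := if i = 0 then j else if j = 0 then m - 1 + i else 0

@[simp] lemma starCode_zero_left (j : ℕ) : starCode m 0 j = j := rfl

lemma starCode_zero_right {i : ℕ} (hi : i ≠ 0) : starCode m i 0 = m - 1 + i := by
  simp [starCode, hi]

lemma starCode_lt {i j : ℕ} (hi : i < n) (hj : j < m) : starCode m i j < n + m - 1 := by
  unfold starCode; split_ifs <;> omega

lemma exists_starCode_eq (hn : 1 ≤ n) (hm : 1 ≤ m) {c : ℕ} (hc : c < n + m - 1) :
    ∃ i < n, ∃ j < m, starCode m i j = c := by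
  by_cases hcm : c < m
  · exact ⟨0, hn, c, hcm, by simp [starCode]⟩
  · exact ⟨c + 1 - m, by omega, 0, hm, by unfold starCode; split_ifs <;> omega⟩

lemma eq_of_starCode_eq {i j i' j' : ℕ} (hj : j < m) (hj' : j' < m)
    (h : starCode m i j = starCode m i' j') (h0 : starCode m i j ≠ 0) : i = i' ∧ j = j' := by
  unfold starCode at h h0; split_ifs at h h0 <;> omega

def starColorFun (m : ℕ) : Fin n ⊕ Fin m → Fin n ⊕ Fin m → ℕ
  | .inl i, .inr j | .inr j, .inl i => starCode m i j
  | _, _ => 0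

lemma starColorFun_comm (x y : Fin n ⊕ Fin m) : starColorFun m x y = starColorFun m y x := by
  cases x <;> cases y <;> rfl

lemma starColorFun_lt (hn : 1 ≤ n) (hm : 1 ≤ m) (x y : Fin n ⊕ Fin m) :
    starColorFun m x y < n + m - 1 := by
  rcases x with i | j <;> rcases y with i' | j'
  · show 0 < n + m - 1; omega
  · exact starCode_lt i.2 j'.2
  · exact starCode_lt i'.2 j.2
  · show 0 < n + m - 1; omega

def starColoring (hn : 1 ≤ n) (hm : 1 ≤ m) : Sym2 (Fin n ⊕ Fin m) → Fin (n + m - 1) :=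
  fun e => ⟨Sym2.lift ⟨starColorFun m, starColorFun_comm⟩ e,
    Sym2.ind (fun x y => starColorFun_lt hn hm x y) e⟩

@[simp]
lemma starColoring_inl_inr (hn : 1 ≤ n) (hm : 1 ≤ m) (i : Fin n) (j : Fin m) :
    (starColoring hn hm s(.inl i, .inr j) : ℕ) = starCode m i j := rfl

variable (hn : 1 ≤ n) (hm : 1 ≤ m)

lemma exists_mem_edgeSet_starColoring_eq (c : Fin (n + m - 1)) :
    ∃ e ∈ (completeBipartiteGraph (Fin n) (Fin m)).edgeSet, starColoring hn hm e = c := by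
  obtain ⟨i, hi, j, hj, hc⟩ := exists_starCode_eq hn hm c.2
  exact ⟨s(.inl ⟨i, hi⟩, .inr ⟨j, hj⟩), by simp, Fin.ext hc⟩

lemma injOn_starColoring : Set.InjOn (starColoring hn hm)
    {e | e ∈ (completeBipartiteGraph (Fin n) (Fin m)).edgeSet ∧
      (starColoring hn hm e : ℕ) ≠ 0} := by
  rintro _ ⟨he, h0⟩ _ ⟨he', -⟩ h
  rw [edgeSet_completeBipartiteGraph] at he he'
  obtain ⟨⟨i, j⟩, rfl⟩ := he
  obtain ⟨⟨i', j'⟩, rfl⟩ := he'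
  obtain ⟨hi, hj⟩ := eq_of_starCode_eq j.2 j'.2 (congrArg Fin.val h) h0
  obtain rfl : i = i' := Fin.ext hi
  obtain rfl : j = j' := Fin.ext hj
  rfl

lemma card_filter_starColoring_eq_one {c : Fin (n + m - 1)} (hc : (c : ℕ) ≠ 0) :
    #{e ∈ (completeBipartiteGraph (Fin n) (Fin m)).edgeFinset | starColoring hn hm e = c} =
      1 := by
  refine le_antisymm (card_le_one.mpr fun e he e' he' => ?_) (card_pos.mpr ?_)
  · simp only [mem_filter, mem_edgeFinset] at he he'
    exact injOn_starColoring hn hm ⟨he.1, he.2 ▸ hc⟩ ⟨he'.1, he'.2 ▸ hc⟩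
      (he.2.trans he'.2.symm)
  · obtain ⟨e, he, hec⟩ := exists_mem_edgeSet_starColoring_eq hn hm c
    exact ⟨e, by simpa using ⟨he, hec⟩⟩

lemma mem_of_surjOn_starColoring {T : Finset (Sym2 (Fin n ⊕ Fin m))}
    (hTG : ↑T ⊆ (completeBipartiteGraph (Fin n) (Fin m)).edgeSet)
    (hT : Set.SurjOn (starColoring hn hm) ↑T Set.univ) {i : Fin n} {j : Fin m}
    (hij : starCode m i j ≠ 0) : s(.inl i, .inr j) ∈ T := by
  obtain ⟨e, heT, he⟩ := hT (Set.mem_univ (starColoring hn hm s(.inl i, .inr j)))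
  have : e = s(.inl i, .inr j) :=
    injOn_starColoring hn hm ⟨hTG heT, by rwa [he, starColoring_inl_inr]⟩ ⟨by simp, hij⟩ he
  exact this ▸ heT

lemma connected_fromEdgeSet_of_bijOn_starColoring {T : Finset (Sym2 (Fin n ⊕ Fin m))}
    (hTG : ↑T ⊆ (completeBipartiteGraph (Fin n) (Fin m)).edgeSet)
    (hT : Set.BijOn (starColoring hn hm) ↑T Set.univ) :
    (fromEdgeSet (T : Set (Sym2 (Fin n ⊕ Fin m)))).Connected := by
  set H := fromEdgeSet (T : Set (Sym2 (Fin n ⊕ Fin m)))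
  have hadj {i : Fin n} {j : Fin m} (h : s(.inl i, .inr j) ∈ T) : H.Adj (.inl i) (.inr j) :=
    (fromEdgeSet_adj _).mpr ⟨h, Sum.inl_ne_inr⟩
  have hstar {i : Fin n} {j : Fin m} (h : starCode m i j ≠ 0) : H.Adj (.inl i) (.inr j) :=
    hadj (mem_of_surjOn_starColoring hn hm hTG hT.surjOn h)
  have hba : H.Reachable (.inr ⟨0, hm⟩) (.inl ⟨0, hn⟩) := by
    obtain ⟨e, heT, he⟩ := hT.surjOn (Set.mem_univ ⟨0, by omega⟩)
    obtain ⟨⟨i, j⟩, rfl⟩ : e ∈ Set.range _ := edgeSet_completeBipartiteGraph ▸ hTG heT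
    have h0 : starCode m i j = 0 := congrArg Fin.val he
    by_cases hi : (i : ℕ) = 0
    · obtain rfl : i = ⟨0, hn⟩ := Fin.ext hi
      obtain rfl : j = ⟨0, hm⟩ := Fin.ext (by simpa using h0)
      exact (hadj heT).symm.reachable
    · -- the colour-0 edge `ij` of `T` misses `a` and `b`, so `b i j a` is a path
      have hj : (j : ℕ) ≠ 0 := by unfold starCode at h0; split_ifs at h0 <;> omega
      have hib : H.Adj (.inl i) (.inr ⟨0, hm⟩) := hstar (by rw [starCode_zero_right hi]; omega)
      have haj : H.Adj (.inl ⟨0, hn⟩) (.inr j) := hstar (by simpa using hj)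
      exact hib.symm.reachable.trans ((hadj heT).reachable.trans haj.symm.reachable)
  refine (connected_iff_exists_forall_reachable H).mpr ⟨.inr ⟨0, hm⟩, ?_⟩
  rintro (i | j)
  · by_cases hi : (i : ℕ) = 0
    · obtain rfl : i = ⟨0, hn⟩ := Fin.ext hi
      exact hba
    · exact (hstar (j := ⟨0, hm⟩) (by rw [starCode_zero_right hi]; omega)).symm.reachable
  · by_cases hj : (j : ℕ) = 0
    · obtain rfl : j = ⟨0, hm⟩ := Fin.ext hj
      rfl
    · exact hba.trans (hstar (i := ⟨0, hn⟩) (by simpa using hj)).reachable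

lemma isJLColoring_starColoring :
    IsJLColoring (completeBipartiteGraph (Fin n) (Fin m)) (starColoring hn hm) :=
  ⟨exists_mem_edgeSet_starColoring_eq hn hm,
    not_hasRainbowCycle_of_forall_bijOn_connected (card_fin_sum_fin hn)
      (exists_mem_edgeSet_starColoring_eq hn hm)
      fun _ => connected_fromEdgeSet_of_bijOn_starColoring hn hm⟩

lemma numRST_starColoring :
    numRST (completeBipartiteGraph (Fin n) (Fin m)) (starColoring hn hm) =
      (n - 1) * (m - 1) + 1 := by
  let c₀ : Fin (n + m - 1) := ⟨0, by omega⟩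
  have hclass (c : Fin (n + m - 1)) (hc : c ≠ c₀) :
      #{e ∈ (completeBipartiteGraph (Fin n) (Fin m)).edgeFinset | starColoring hn hm e = c} = 1 :=
    card_filter_starColoring_eq_one hn hm fun h => hc (Fin.ext h)
  rw [numRST_eq_prod (isJLColoring_starColoring hn hm).2 (card_fin_sum_fin hn),
    prod_eq_single c₀ (fun c _ hc => hclass c hc) (by simp)]
  have hsum := sum_card_filter_edgeFinset_completeBipartiteGraph (starColoring hn hm)
  rw [← add_sum_erase _ _ (mem_univ c₀),
    sum_congr rfl fun c hc => hclass c (ne_of_mem_erase hc), sum_const,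
    card_erase_of_mem (mem_univ _), card_univ, Fintype.card_fin, smul_eq_mul, mul_one] at hsum
  have := mul_add_one_eq_sub_one_mul_sub_one_add hn hm
  omega

end StarColoring

/-- For `1 ≤ n ≤ m`, there is a JL-coloring of `K_{n,m}` with exactly `(n-1)(m-1)+1`
rainbow spanning trees, and every JL-coloring `φ` of `K_{n,m}` satisfies
`|R(K_{n,m},φ)| ≥ (n-1)(m-1)+1`. -/
theorem stmt_17 (n m : ℕ) (hn : 1 ≤ n) (hnm : n ≤ m) :
    (∃ φ : Sym2 (Fin n ⊕ Fin m) → Fin (n + m - 1),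
        IsJLColoring (completeBipartiteGraph (Fin n) (Fin m)) φ ∧
          numRST (completeBipartiteGraph (Fin n) (Fin m)) φ = (n - 1) * (m - 1) + 1) ∧
      ∀ φ : Sym2 (Fin n ⊕ Fin m) → Fin (n + m - 1),
        IsJLColoring (completeBipartiteGraph (Fin n) (Fin m)) φ →
          (n - 1) * (m - 1) + 1 ≤ numRST (completeBipartiteGraph (Fin n) (Fin m)) φ := by
  have hm : 1 ≤ m := hn.trans hnm
  refine ⟨⟨starColoring hn hm, isJLColoring_starColoring hn hm, numRST_starColoring hn hm⟩,
    fun φ ⟨hsurj, hφ⟩ => ?_⟩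
  have hclass_pos (c) (_ : c ∈ univ) :
      1 ≤ #{e ∈ (completeBipartiteGraph (Fin n) (Fin m)).edgeFinset | φ e = c} := by
    obtain ⟨e, he, hec⟩ := hsurj c
    exact card_pos.mpr ⟨e, by simpa using ⟨he, hec⟩⟩
  have := sum_add_one_le_prod_add_card univ _ hclass_pos
  rw [sum_card_filter_edgeFinset_completeBipartiteGraph,
    ← numRST_eq_prod hφ (card_fin_sum_fin hn), card_univ, Fintype.card_fin,
    mul_add_one_eq_sub_one_mul_sub_one_add hn hm] at this
  omega
end
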